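/- arXiv:1312.6249 — 3 statements merged into one kernel-verified Lean document; each statement's English description precedes it below -/
import Mathlib

section
/- In the NOT-gadget economy (n_x > 4α students demanding {c_x, c_{1-x}}, capacity q_{1-x} = n_x/2, at most n_x/4 outside students interested in c_{1-x}), if the price satisfies p*_{1-x} > 1 - p*_x + β in a price vector with budgets in [1,1+β], then the course c_{1-x} is undersubscribed by at least n_x/4 seats, i.e., the clearing error satisfies ‖z‖₂ ≥ n_x/4. -/
open Finset

/-- An economy: course capacities and, for each student, an ordered list
(most preferred first) of permissible course bundles. -/
structure Econ (N M : ℕ) where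
  q : Fin M → ℕ
  pref : Fin N → List (Finset (Fin M))

/-- Total price of a bundle. -/
def cost {M : ℕ} (p : Fin M → ℝ) (S : Finset (Fin M)) : ℝ := ∑ j ∈ S, p j

/-- `Chooses p bdg l S`: `S` is the most preferred affordable bundle in the
ordered list `l` (most preferred first) at prices `p` with budget `bdg`
(`S = ∅` if no listed bundle is affordable). -/
def Chooses {M : ℕ} (p : Fin M → ℝ) (bdg : ℝ) (l : List (Finset (Fin M)))
    (S : Finset (Fin M)) : Prop :=
  (S = ∅ ∧ ∀ T ∈ l, ¬ cost p T ≤ bdg) ∨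
  (S ∈ l ∧ cost p S ≤ bdg ∧ ∀ T ∈ l.take (l.idxOf S), ¬ cost p T ≤ bdg)

/-- Number of students enrolled in course `j`. -/
def enroll {N M : ℕ} (x : Fin N → Finset (Fin M)) (j : Fin M) : ℕ :=
  (univ.filter fun i => j ∈ x i).card

/-- Clearing error of course `j`: oversubscription always counts; for a
positively priced course undersubscription counts as well. -/
noncomputable def zerr {N M : ℕ} (E : Econ N M) (p : Fin M → ℝ) (x : Fin N → Finset (Fin M))
    (j : Fin M) : ℝ :=
  if 0 < p j then (enroll x j : ℝ) - E.q j
  else max ((enroll x j : ℝ) - E.q j) 0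

/-- L2 norm of the clearing-error vector. -/
noncomputable def clearErr {N M : ℕ} (E : Econ N M) (p : Fin M → ℝ)
    (x : Fin N → Finset (Fin M)) : ℝ :=
  Real.sqrt (∑ j, (zerr E p x j) ^ 2)

/-- An `(α,β)`-CEEI: nonnegative prices, budgets in `[1,1+β]`, every student
is allocated her most preferred affordable bundle, and the total clearing
error is at most `α`. -/
structure IsCEEI {N M : ℕ} (E : Econ N M) (α β : ℝ) (p : Fin M → ℝ)
    (b : Fin N → ℝ) (x : Fin N → Finset (Fin M)) : Prop where
  price_nonneg : ∀ j, 0 ≤ p j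
  budget : ∀ i, 1 ≤ b i ∧ b i ≤ 1 + β
  alloc : ∀ i, Chooses p (b i) (E.pref i) (x i)
  clearing : clearErr E p x ≤ α

/-- Student `i` is interested in course `j` (lists some bundle containing it). -/
def Interested {N M : ℕ} (E : Econ N M) (j : Fin M) (i : Fin N) : Prop :=
  ∃ S ∈ E.pref i, j ∈ S

/-!
Since `p cx + p cout > 1 + β`, no student of the gadget can afford her only bundle, so all of them
get nothing. Every student enrolled in `cout` therefore lies outside the gadget and is interested
in `cout`; there are at most `nx / 4` of these, so `cout`, with capacity `nx / 2` and a positive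
price, is short of at least `nx / 4` students, and this single coordinate already bounds `‖z‖₂`.
-/

section Chooses

variable {M : ℕ} {p : Fin M → ℝ} {bdg : ℝ} {l : List (Finset (Fin M))} {S : Finset (Fin M)}

theorem Chooses.eq_empty_of_singleton {T : Finset (Fin M)} (h : Chooses p bdg [T] S)
    (hT : ¬ cost p T ≤ bdg) : S = ∅ := by
  rcases h with ⟨hS, _⟩ | ⟨hmem, hS, _⟩
  · exact hS
  · rw [List.mem_singleton.mp hmem] at hS
    exact absurd hS hT

theorem Chooses.mem_of_nonempty (h : Chooses p bdg l S) (hS : S.Nonempty) : S ∈ l := by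
  rcases h with ⟨rfl, _⟩ | ⟨hmem, _⟩
  · exact absurd hS Finset.not_nonempty_empty
  · exact hmem

end Chooses

section Clearing

variable {N M : ℕ} (E : Econ N M) (p : Fin M → ℝ) (x : Fin N → Finset (Fin M))

theorem zerr_of_pos {j : Fin M} (hj : 0 < p j) : zerr E p x j = enroll x j - E.q j :=
  if_pos hj

theorem abs_zerr_le_clearErr (j : Fin M) : |zerr E p x j| ≤ clearErr E p x := by
  rw [← Real.sqrt_sq_eq_abs]
  exact Real.sqrt_le_sqrt <|
    Finset.single_le_sum (f := fun j => zerr E p x j ^ 2) (fun _ _ => sq_nonneg _) (mem_univ j)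

theorem enroll_le_ncard_interested {b : Fin N → ℝ}
    (halloc : ∀ i, Chooses p (b i) (E.pref i) (x i)) (A : Finset (Fin N))
    (hA : ∀ i ∈ A, x i = ∅) (j : Fin M) :
    enroll x j ≤ ({i | i ∉ A ∧ Interested E j i} : Set (Fin N)).ncard := by
  rw [enroll, ← Set.ncard_coe_finset]
  refine Set.ncard_le_ncard (fun i hi => ?_) (Set.toFinite _)
  have hji : j ∈ x i := (mem_filter.mp hi).2
  refine ⟨fun hiA => by simp [hA i hiA] at hji, x i, ?_, hji⟩
  exact (halloc i).mem_of_nonempty ⟨j, hji⟩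

end Clearing

theorem not_gadget_overpriced_general {N M : ℕ} (E : Econ N M) (β : ℝ) (cx cout : Fin M)
    (hne : cx ≠ cout) (nx : ℕ)
    (A : Finset (Fin N))
    (hApref : ∀ i ∈ A, E.pref i = [({cx, cout} : Finset (Fin M))])
    (hq : (E.q cout : ℝ) = nx / 2)
    (hother : (({i | i ∉ A ∧ Interested E cout i} : Set (Fin N)).ncard : ℝ) ≤ nx / 4)
    (p : Fin M → ℝ) (hppos : 0 < p cout)
    (b : Fin N → ℝ) (hb : ∀ i, 1 ≤ b i ∧ b i ≤ 1 + β)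
    (x : Fin N → Finset (Fin M)) (halloc : ∀ i, Chooses p (b i) (E.pref i) (x i))
    (hover : p cout > 1 - p cx + β) :
    (nx : ℝ) / 4 ≤ clearErr E p x := by
  have hA : ∀ i ∈ A, x i = ∅ := fun i hi => by
    have h := halloc i
    rw [hApref i hi] at h
    refine h.eq_empty_of_singleton ?_
    rw [cost, Finset.sum_pair hne]
    linarith [(hb i).2]
  have henroll : (enroll x cout : ℝ) ≤ nx / 4 :=
    le_trans (by exact_mod_cast enroll_le_ncard_interested E p x halloc A hA cout) hother
  have hz : zerr E p x cout ≤ -(nx / 4) := by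
    rw [zerr_of_pos E p x hppos, hq]
    linarith
  calc (nx : ℝ) / 4 ≤ |zerr E p x cout| := le_abs.mpr (Or.inr (by linarith))
    _ ≤ clearErr E p x := abs_zerr_le_clearErr E p x cout

/-- **NOT gadget, overpriced case.** In the NOT-gadget economy, if
`p cout > 1 - p cx + β` (the output course being positively priced), with
budgets in `[1,1+β]` and every student allocated her most preferred
affordable bundle, then `cout` is undersubscribed by at least `nx/4` seats,
so the clearing error satisfies `‖z‖₂ ≥ nx/4`. -/
theorem not_gadget_overpriced {N M : ℕ} (E : Econ N M) (β : ℝ) (cx cout : Fin M)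
    (hne : cx ≠ cout) (nx : ℕ)
    (A : Finset (Fin N)) (hAcard : A.card = nx)
    (hApref : ∀ i ∈ A, E.pref i = [({cx, cout} : Finset (Fin M))])
    (hq : (E.q cout : ℝ) = nx / 2)
    (hother : (({i | i ∉ A ∧ Interested E cout i} : Set (Fin N)).ncard : ℝ) ≤ nx / 4)
    (p : Fin M → ℝ) (hpnn : ∀ j, 0 ≤ p j) (hppos : 0 < p cout)
    (b : Fin N → ℝ) (hb : ∀ i, 1 ≤ b i ∧ b i ≤ 1 + β)
    (x : Fin N → Finset (Fin M)) (halloc : ∀ i, Chooses p (b i) (E.pref i) (x i))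
    (hover : p cout > 1 - p cx + β) :
    (nx : ℝ) / 4 ≤ clearErr E p x :=
  not_gadget_overpriced_general E β cx cout hne nx A hApref hq hother p hppos b hb x halloc hover
end

section
/- In the NOT-gadget economy, if p*_{1-x} < 1 - p*_x, then all n_x dedicated students can afford the bundle {c_x, c_{1-x}} (since every budget is at least 1), hence course c_{1-x} is oversubscribed by at least n_x/2, so ‖z‖₂ ≥ n_x/2 > α, contradicting the (α,β)-CEEI conditions when n_x > 4α. -/
open Finset

/-
The dedicated students' only bundle `{cx, cout}` costs at most `p cx + p cout < 1`, which every
budget covers, so each of them is enrolled in `cout`. Hence `cout` has at least `nx` students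
against a capacity of `nx / 2`, its clearing error is at least `nx / 2`, and so is the L2 norm
of the error vector; but that norm is at most `α < nx / 4`.
-/

lemma cost_pair_le {M : ℕ} {p : Fin M → ℝ} (hp : ∀ j, 0 ≤ p j) (a b : Fin M) :
    cost p {a, b} ≤ p a + p b := by
  by_cases hab : a = b
  · subst hab
    simpa [cost] using hp a
  · exact (Finset.sum_pair hab).le

lemma Chooses.eq_of_affordable_singleton {M : ℕ} {p : Fin M → ℝ} {bdg : ℝ}
    {S T : Finset (Fin M)} (h : Chooses p bdg [S] T) (hS : cost p S ≤ bdg) : T = S := by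
  rcases h with ⟨-, hnone⟩ | ⟨hT, -, -⟩
  · exact absurd hS (hnone S (List.mem_singleton_self S))
  · exact List.mem_singleton.mp hT

lemma card_le_enroll {N M : ℕ} {x : Fin N → Finset (Fin M)} {j : Fin M} {A : Finset (Fin N)}
    (hA : ∀ i ∈ A, j ∈ x i) : A.card ≤ enroll x j :=
  Finset.card_le_card fun i hi => Finset.mem_filter.mpr ⟨Finset.mem_univ i, hA i hi⟩

lemma enroll_sub_le_zerr {N M : ℕ} (E : Econ N M) (p : Fin M → ℝ)
    (x : Fin N → Finset (Fin M)) (j : Fin M) : (enroll x j : ℝ) - E.q j ≤ zerr E p x j := by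
  unfold zerr
  split_ifs
  · exact le_rfl
  · exact le_max_left _ _

lemma zerr_le_clearErr {N M : ℕ} (E : Econ N M) (p : Fin M → ℝ)
    (x : Fin N → Finset (Fin M)) (j : Fin M) : zerr E p x j ≤ clearErr E p x :=
  (le_abs_self _).trans <| Real.abs_le_sqrt <|
    Finset.single_le_sum (f := fun k => zerr E p x k ^ 2) (fun _ _ => sq_nonneg _)
      (Finset.mem_univ j)

lemma IsCEEI.enroll_sub_le {N M : ℕ} {E : Econ N M} {α β : ℝ} {p : Fin M → ℝ}
    {b : Fin N → ℝ} {x : Fin N → Finset (Fin M)} (hC : IsCEEI E α β p b x) (j : Fin M) :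
    (enroll x j : ℝ) - E.q j ≤ α :=
  (enroll_sub_le_zerr E p x j).trans <| (zerr_le_clearErr E p x j).trans hC.clearing

theorem not_gadget_underpriced_general {N M : ℕ} (E : Econ N M) (α β : ℝ)
    (cx cout : Fin M) (nx : ℕ)
    (A : Finset (Fin N)) (hAcard : A.card = nx)
    (hApref : ∀ i ∈ A, E.pref i = [({cx, cout} : Finset (Fin M))])
    (hq : (E.q cout : ℝ) = nx / 2)
    (hnx : (nx : ℝ) > 4 * α)
    (p : Fin M → ℝ) (hunder : p cout < 1 - p cx) :
    ∀ (b : Fin N → ℝ) (x : Fin N → Finset (Fin M)), ¬ IsCEEI E α β p b x := by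
  intro b x hC
  have henrolled : ∀ i ∈ A, cout ∈ x i := by
    intro i hi
    have hchoice := hC.alloc i
    rw [hApref i hi] at hchoice
    have haffordable : cost p {cx, cout} ≤ b i := by
      linarith [cost_pair_le hC.price_nonneg cx cout, (hC.budget i).1]
    rw [hchoice.eq_of_affordable_singleton haffordable]
    exact Finset.mem_insert_of_mem (Finset.mem_singleton_self cout)
  have hcard : (nx : ℝ) ≤ enroll x cout := by exact_mod_cast hAcard ▸ card_le_enroll henrolled
  linarith [hC.enroll_sub_le cout, Nat.cast_nonneg (α := ℝ) nx]

/-- **NOT gadget, underpriced case.** In the NOT-gadget economy, if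
`p cout < 1 - p cx`, then all `nx` dedicated students can afford the bundle
`{cx, cout}` (budgets are at least 1), hence `cout` is oversubscribed by at
least `nx/2 > 2α`, so no budgets and allocation can form an `(α,β)`-CEEI at
these prices when `nx > 4α`. -/
theorem not_gadget_underpriced {N M : ℕ} (E : Econ N M) (α β : ℝ) (hα : 0 ≤ α)
    (cx cout : Fin M) (hne : cx ≠ cout) (nx : ℕ)
    (A : Finset (Fin N)) (hAcard : A.card = nx)
    (hApref : ∀ i ∈ A, E.pref i = [({cx, cout} : Finset (Fin M))])
    (hq : (E.q cout : ℝ) = nx / 2)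
    (hnx : (nx : ℝ) > 4 * α)
    (p : Fin M → ℝ) (hunder : p cout < 1 - p cx) :
    ∀ (b : Fin N → ℝ) (x : Fin N → Finset (Fin M)), ¬ IsCEEI E α β p b x :=
  not_gadget_underpriced_general E α β cx cout nx A hAcard hApref hq hnx p hunder
end

section
/- Variable gadget soundness (consistency): In the variable gadget with inner courses D_L, D_C, D_R (each capacity 1) and students s_T (preference list {D_L,D_C}, {D_L,O_T^1,…,O_T^5}, {D_R}) and s_F (preference list {D_R,D_C}, {D_R,O_F^1,…,O_F^5}, {D_L}), in any exact CEEI (clearing error 0, equal budgets b_i = 1) it is impossible that s_T takes {D_L,O_T^1,…,O_T^5} and simultaneously s_F takes {D_R,O_F^1,…,O_F^5}: otherwise neither student is assigned D_C, and if p(D_C) = 0 then both students can afford and strictly prefer their first-listed bundle containing D_C, while if p(D_C) > 0 then D_C is undersubscribed, contradicting exact market clearing. -/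
open Finset

/-! If both students take their middle bundles, nobody holds `DC`. A positively priced course
must be exactly full, so `p DC = 0`; but then `{DL, DC}` costs no more than the bundle `sT`
actually bought, so `sT` could afford her first choice, contradicting optimality. -/

namespace Chooses

variable {M : ℕ} {p : Fin M → ℝ} {bdg : ℝ} {l : List (Finset (Fin M))} {S : Finset (Fin M)}

theorem mem_of_nonempty_s15 (h : Chooses p bdg l S) (hS : S.Nonempty) : S ∈ l := by
  rcases h with ⟨rfl, -⟩ | ⟨hmem, -, -⟩
  · exact absurd rfl hS.ne_empty
  · exact hmem

theorem cost_le (h : Chooses p bdg l S) (hS : S.Nonempty) : cost p S ≤ bdg := by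
  rcases h with ⟨rfl, -⟩ | ⟨-, hcost, -⟩
  · exact absurd rfl hS.ne_empty
  · exact hcost

theorem lt_cost_head {T : Finset (Fin M)} (h : Chooses p bdg (T :: l) S) (hS : S.Nonempty)
    (hTS : T ≠ S) : bdg < cost p T := by
  rcases h with ⟨rfl, -⟩ | ⟨-, -, hbefore⟩
  · exact absurd rfl hS.ne_empty
  · rw [List.idxOf_cons_ne _ (by simpa using hTS)] at hbefore
    exact not_le.mp (hbefore T (by simp))

end Chooses

theorem exists_mem_of_enroll_pos {N M : ℕ} {x : Fin N → Finset (Fin M)} {j : Fin M}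
    (h : 0 < enroll x j) : ∃ i, j ∈ x i := by
  obtain ⟨i, hi⟩ := Finset.card_pos.mp h
  exact ⟨i, (Finset.mem_filter.mp hi).2⟩

namespace IsCEEI

variable {N M : ℕ} {E : Econ N M} {α β : ℝ} {p : Fin M → ℝ} {b : Fin N → ℝ}
  {x : Fin N → Finset (Fin M)}

theorem budget_eq_one (hC : IsCEEI E α 0 p b x) (i : Fin N) : b i = 1 :=
  le_antisymm (by simpa using (hC.budget i).2) (hC.budget i).1

theorem zerr_eq_zero (hC : IsCEEI E 0 β p b x) (j : Fin M) : zerr E p x j = 0 := by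
  have hsum : ∑ j, zerr E p x j ^ 2 = 0 :=
    le_antisymm (Real.sqrt_eq_zero'.mp (le_antisymm hC.clearing (Real.sqrt_nonneg _)))
      (Finset.sum_nonneg fun j _ => sq_nonneg _)
  exact pow_eq_zero_iff two_ne_zero |>.mp <|
    (Finset.sum_eq_zero_iff_of_nonneg fun j _ => sq_nonneg _).mp hsum j (Finset.mem_univ j)

theorem enroll_eq_of_price_pos (hC : IsCEEI E 0 β p b x) {j : Fin M} (hp : 0 < p j) :
    enroll x j = E.q j := by
  have hz := hC.zerr_eq_zero j
  rw [zerr, if_pos hp, sub_eq_zero] at hz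
  exact_mod_cast hz

end IsCEEI

theorem variable_gadget_soundness_general {N M : ℕ} (E : Econ N M)
    (DL DC DR : Fin M) (OT OF : Fin 5 → Fin M)
    (hdistinct : DL ≠ DC ∧ DL ≠ DR ∧ DC ≠ DR)
    (hOTD : ∀ t, OT t ≠ DL ∧ OT t ≠ DC ∧ OT t ≠ DR)
    (hOFD : ∀ t, OF t ≠ DL ∧ OF t ≠ DC ∧ OF t ≠ DR)
    (sT sF : Fin N)
    (hprefT : E.pref sT =
      [({DL, DC} : Finset (Fin M)), insert DL (univ.image OT), ({DR} : Finset (Fin M))])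
    (hqC : E.q DC = 1)
    (hDCexcl : ∀ i : Fin N, ∀ S ∈ E.pref i, DC ∈ S →
      (i = sT ∧ S = ({DL, DC} : Finset (Fin M))) ∨
      (i = sF ∧ S = ({DR, DC} : Finset (Fin M))))
    (p : Fin M → ℝ) (b : Fin N → ℝ) (x : Fin N → Finset (Fin M))
    (hC : IsCEEI E 0 0 p b x) :
    ¬ (x sT = insert DL (univ.image OT) ∧ x sF = insert DR (univ.image OF)) := by
  rintro ⟨hT, hF⟩
  have hDC_T : DC ∉ x sT := by
    simpa [hT, eq_comm, hdistinct.1] using fun t => (hOTD t).2.1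
  have hDC_F : DC ∉ x sF := by
    simpa [hF, hdistinct.2.2] using fun t => (hOFD t).2.1
  have hDC_free : ∀ i, DC ∉ x i := by
    intro i hi
    rcases hDCexcl i _ ((hC.alloc i).mem_of_nonempty_s15 ⟨DC, hi⟩) hi with ⟨rfl, -⟩ | ⟨rfl, -⟩
    exacts [hDC_T hi, hDC_F hi]
  have hpDC : p DC = 0 := by
    refine le_antisymm (not_lt.mp fun hpos => ?_) (hC.price_nonneg DC)
    have hfull : 0 < enroll x DC := by rw [hC.enroll_eq_of_price_pos hpos, hqC]; exact one_pos
    obtain ⟨i, hi⟩ := exists_mem_of_enroll_pos hfull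
    exact hDC_free i hi
  have hchT := hC.alloc sT
  rw [hprefT, hC.budget_eq_one sT] at hchT
  have hDL : DL ∈ x sT := by simp [hT]
  have hne : ({DL, DC} : Finset (Fin M)) ≠ x sT := fun h => hDC_T (h ▸ by simp)
  refine lt_irrefl (1 : ℝ) ?_
  calc (1 : ℝ) < cost p {DL, DC} := hchT.lt_cost_head ⟨DL, hDL⟩ hne
    _ = p DL := by rw [cost, Finset.sum_pair hdistinct.1, hpDC, add_zero]
    _ ≤ cost p (x sT) := Finset.single_le_sum (fun j _ => hC.price_nonneg j) hDL
    _ ≤ 1 := hchT.cost_le ⟨DL, hDL⟩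

/-- **Variable gadget soundness (consistency).** In the variable gadget, with
inner courses `DL, DC, DR` of capacity 1, student `sT` with preference list
`({DL,DC}, {DL,OT 0,…,OT 4}, {DR})` and student `sF` with preference list
`({DR,DC}, {DR,OF 0,…,OF 4}, {DL})`, where `DC` appears only in the first
bundle of each of the two students, in any exact CEEI (a `(0,0)`-CEEI, so
budgets all equal 1 and clearing error 0) it is impossible that `sT` takes
`{DL,OT 0,…,OT 4}` while simultaneously `sF` takes `{DR,OF 0,…,OF 4}`. -/
theorem variable_gadget_soundness {N M : ℕ} (E : Econ N M)
    (DL DC DR : Fin M) (OT OF : Fin 5 → Fin M)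
    (hOT : Function.Injective OT) (hOF : Function.Injective OF)
    (hdistinct : DL ≠ DC ∧ DL ≠ DR ∧ DC ≠ DR)
    (hOTD : ∀ t, OT t ≠ DL ∧ OT t ≠ DC ∧ OT t ≠ DR)
    (hOFD : ∀ t, OF t ≠ DL ∧ OF t ≠ DC ∧ OF t ≠ DR)
    (hOTF : ∀ t t', OT t ≠ OF t')
    (sT sF : Fin N) (hsTF : sT ≠ sF)
    (hprefT : E.pref sT =
      [({DL, DC} : Finset (Fin M)), insert DL (univ.image OT), ({DR} : Finset (Fin M))])
    (hprefF : E.pref sF =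
      [({DR, DC} : Finset (Fin M)), insert DR (univ.image OF), ({DL} : Finset (Fin M))])
    (hqL : E.q DL = 1) (hqC : E.q DC = 1) (hqR : E.q DR = 1)
    (hDCexcl : ∀ i : Fin N, ∀ S ∈ E.pref i, DC ∈ S →
      (i = sT ∧ S = ({DL, DC} : Finset (Fin M))) ∨
      (i = sF ∧ S = ({DR, DC} : Finset (Fin M))))
    (p : Fin M → ℝ) (b : Fin N → ℝ) (x : Fin N → Finset (Fin M))
    (hC : IsCEEI E 0 0 p b x) :
    ¬ (x sT = insert DL (univ.image OT) ∧ x sF = insert DR (univ.image OF)) :=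
  variable_gadget_soundness_general E DL DC DR OT OF hdistinct hOTD hOFD sT sF hprefT hqC hDCexcl p
    b x hC
end
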